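/- arXiv:2410.21234 — 2 statements merged into one kernel-verified Lean document; each statement's English description precedes it below -/
import Mathlib

section
/- Let X ∈ ℝ^{n×n}, Y ∈ ℝ^{m×n}, Z = X - Xᵀ + YᵀY, and define Aᵀ = (I+Z)⁻¹(I-Z) and Bᵀ = -2Y(I+Z)⁻¹. Then A Aᵀ + B Bᵀ = I. -/
/-!
Everything follows from `Z + Zᵀ = 2 YᵀY`. It gives `2 vᵀZv = 2 |Yv|² ≥ 0`, so `(1 + Z) v = 0`
forces `|v|² ≤ 0` and `M = 1 + Z` is invertible. Writing `C = M⁻¹(1 - Z) = Aᵀ` and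
`D = -2 Y M⁻¹ = Bᵀ`, we have `CM = 1 - Z` (as `M` commutes with `1 - Z`) and `DM = -2 Y`, so
`Mᵀ(CᵀC + DᵀD)M = (1 - Z)ᵀ(1 - Z) + 4 YᵀY = (1 + Z)ᵀ(1 + Z) = MᵀM`, and cancelling `M` gives
`CᵀC + DᵀD = 1`.
-/

open Matrix

namespace Matrix

variable {n m R : Type*} [Fintype n] [Fintype m]

theorem dotProduct_transpose_mul_self_mulVec [CommSemiring R] (Y : Matrix m n R) (v : n → R) :
    v ⬝ᵥ ((Yᵀ * Y) *ᵥ v) = (Y *ᵥ v) ⬝ᵥ (Y *ᵥ v) := by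
  rw [← mulVec_mulVec, dotProduct_mulVec, vecMul_transpose, dotProduct_comm]

theorem dotProduct_self_nonneg [CommRing R] [LinearOrder R] [IsStrictOrderedRing R]
    (v : n → R) : 0 ≤ v ⬝ᵥ v :=
  Finset.sum_nonneg fun i _ => mul_self_nonneg (v i)

theorem dotProduct_mulVec_nonneg_of_add_transpose_eq [CommRing R] [LinearOrder R]
    [IsStrictOrderedRing R] {Z : Matrix n n R} {Y : Matrix m n R}
    (hZY : Z + Zᵀ = (2 : R) • (Yᵀ * Y)) (v : n → R) : 0 ≤ v ⬝ᵥ (Z *ᵥ v) := by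
  have hquad : 2 * (v ⬝ᵥ (Z *ᵥ v)) = 2 * ((Y *ᵥ v) ⬝ᵥ (Y *ᵥ v)) := by
    have := congrArg (fun W => v ⬝ᵥ (W *ᵥ v)) hZY
    simp only [add_mulVec, dotProduct_add, dotProduct_transpose_mulVec, smul_mulVec,
      dotProduct_smul, dotProduct_transpose_mul_self_mulVec, smul_eq_mul] at this
    rw [two_mul, this]
  rw [mul_right_inj' two_ne_zero] at hquad
  exact hquad ▸ dotProduct_self_nonneg _

variable [DecidableEq n]

theorem isUnit_one_add_of_dotProduct_mulVec_nonneg [Field R] [LinearOrder R]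
    [IsStrictOrderedRing R] {Z : Matrix n n R} (hZ : ∀ v, 0 ≤ v ⬝ᵥ (Z *ᵥ v)) :
    IsUnit (1 + Z) := by
  rw [isUnit_iff_isUnit_det, isUnit_iff_ne_zero]
  intro hdet
  obtain ⟨v, hv, hMv⟩ := exists_mulVec_eq_zero_iff.2 hdet
  have hsum : v ⬝ᵥ v + v ⬝ᵥ (Z *ᵥ v) = 0 := by
    simpa only [add_mulVec, one_mulVec, dotProduct_add, dotProduct_zero]
      using congrArg (v ⬝ᵥ ·) hMv
  have hvv : v ⬝ᵥ v = 0 :=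
    le_antisymm (by linarith [hZ v]) (dotProduct_self_nonneg v)
  exact hv (dotProduct_self_eq_zero.1 hvv)

theorem cayley_transpose_mul_self_add [CommRing R] {Z : Matrix n n R} {Y : Matrix m n R}
    (hZY : Z + Zᵀ = (2 : R) • (Yᵀ * Y)) (hM : IsUnit (1 + Z)) :
    ((1 + Z)⁻¹ * (1 - Z))ᵀ * ((1 + Z)⁻¹ * (1 - Z)) +
      ((-2 : R) • (Y * (1 + Z)⁻¹))ᵀ * ((-2 : R) • (Y * (1 + Z)⁻¹)) = 1 := by
  set M := 1 + Z with hMdef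
  have hinv : M⁻¹ * M = 1 := nonsing_inv_mul M ((isUnit_iff_isUnit_det M).1 hM)
  have hC : M⁻¹ * (1 - Z) * M = 1 - Z := by
    have hcomm : (1 - Z) * M = M * (1 - Z) := by rw [hMdef]; noncomm_ring
    rw [mul_assoc, hcomm, ← mul_assoc, hinv, one_mul]
  have hD : (-2 : R) • (Y * M⁻¹) * M = (-2 : R) • Y := by
    rw [Matrix.smul_mul, Matrix.mul_assoc, hinv, Matrix.mul_one]
  have hgram : (1 - Z)ᵀ * (1 - Z) + ((-2 : R) • Y)ᵀ * ((-2 : R) • Y) = Mᵀ * M := by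
    have h4 : ((-2 : R) • Y)ᵀ * ((-2 : R) • Y) = (2 : R) • (Z + Zᵀ) := by
      rw [hZY, transpose_smul, Matrix.smul_mul, Matrix.mul_smul, smul_smul, smul_smul]
      norm_num
    rw [h4, hMdef, two_smul]
    simp only [transpose_add, transpose_sub, transpose_one]
    noncomm_ring
  refine hM.mul_right_cancel <| ((isUnit_transpose M).2 hM).mul_left_cancel ?_
  calc Mᵀ * (((M⁻¹ * (1 - Z))ᵀ * (M⁻¹ * (1 - Z)) +
          ((-2 : R) • (Y * M⁻¹))ᵀ * ((-2 : R) • (Y * M⁻¹))) * M)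
      = (M⁻¹ * (1 - Z) * M)ᵀ * (M⁻¹ * (1 - Z) * M) +
          ((-2 : R) • (Y * M⁻¹) * M)ᵀ * ((-2 : R) • (Y * M⁻¹) * M) := by
        simp only [transpose_mul, Matrix.mul_add, Matrix.add_mul, Matrix.mul_assoc]
    _ = Mᵀ * (1 * M) := by rw [hC, hD, hgram, one_mul]

end Matrix

theorem stmt_2 (n m : ℕ) (X : Matrix (Fin n) (Fin n) ℝ) (Y : Matrix (Fin m) (Fin n) ℝ)
    (Z : Matrix (Fin n) (Fin n) ℝ) (hZ : Z = X - Xᵀ + Yᵀ * Y)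
    (A : Matrix (Fin n) (Fin n) ℝ) (hA : Aᵀ = (1 + Z)⁻¹ * (1 - Z))
    (B : Matrix (Fin n) (Fin m) ℝ) (hB : Bᵀ = (-2 : ℝ) • (Y * (1 + Z)⁻¹)) :
    A * Aᵀ + B * Bᵀ = 1 := by
  have hZY : Z + Zᵀ = (2 : ℝ) • (Yᵀ * Y) := by
    rw [hZ, two_smul]
    simp only [transpose_add, transpose_sub, transpose_mul, transpose_transpose]
    abel
  have hM : IsUnit (1 + Z) :=
    isUnit_one_add_of_dotProduct_mulVec_nonneg (dotProduct_mulVec_nonneg_of_add_transpose_eq hZY)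
  have key := cayley_transpose_mul_self_add hZY hM
  rwa [← hA, ← hB, transpose_transpose, transpose_transpose] at key
end

section
/- Let X ⊂ ℝⁿ be compact and covered by finitely many ℓ∞-balls G_i = {x : ‖x − x̄_i‖∞ ≤ δ}. Suppose for each i there exists a data point (x_j, y_j) and vertices v_k of G_i such that ε_i = ‖Φ(x_j) − y_j‖₂ + (K+γ) max_k ‖x_j − v_k‖₂ is finite, where f is K-Lipschitz, Φ is γ-Lipschitz, and y_j = f(x_j). Then for all x ∈ X, ‖Φ(x) − f(x)‖₂ ≤ max_i ε_i, since every point of G_i lies in the convex hull of its vertices and hence within max_k ‖x_j − v_k‖₂ of x_j. -/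
/-!
Pick the cube `G i` containing `x`. Coordinatewise, the vertex of `G i` farthest from the data
point `x_j` is at least as far from `x_j` as `x` is, so `‖x_j - x‖` is bounded by the largest
vertex distance, and the triangle inequality through `x_j` with the Lipschitz bounds of `Φ`
and `f` gives `‖Φ x - f x‖ ≤ ε i`.
-/

open Finset

noncomputable def cubeVertex {ι : Type*} (c : EuclideanSpace ℝ ι) (δ : ℝ) (s : ι → Bool) :
    EuclideanSpace ℝ ι :=
  (WithLp.equiv 2 (ι → ℝ)).symm (fun k => c k + δ * (if s k then 1 else -1))

lemma exists_cubeVertex_norm_sub_le {ι : Type*} [Fintype ι] {δ : ℝ} {x c : EuclideanSpace ℝ ι}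
    (hx : ‖WithLp.equiv 2 (ι → ℝ) (x - c)‖ ≤ δ) (p : EuclideanSpace ℝ ι) :
    ∃ s, ‖p - x‖ ≤ ‖p - cubeVertex c δ s‖ := by
  refine ⟨fun k => decide (p k ≤ c k), ?_⟩
  rw [EuclideanSpace.norm_eq, EuclideanSpace.norm_eq]
  gcongr with k
  have hk : |x k - c k| ≤ δ := by simpa using (norm_le_pi_norm _ k).trans hx
  obtain ⟨hk₁, hk₂⟩ := abs_le.mp hk
  simp only [cubeVertex, PiLp.sub_apply, WithLp.equiv_symm_apply, Real.norm_eq_abs]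
  rw [← sq_le_sq]
  by_cases hpc : p k ≤ c k <;> simp [hpc] <;> nlinarith

lemma nonneg_of_norm_sub_le_mul {E F : Type*} [NormedAddCommGroup E] [NormedAddCommGroup F]
    {f : E → F} {K : ℝ} (hf : ∀ u v, ‖f u - f v‖ ≤ K * ‖u - v‖) {u v : E} (huv : u ≠ v) :
    0 ≤ K :=
  nonneg_of_mul_nonneg_left ((norm_nonneg _).trans (hf u v))
    (norm_pos_iff.mpr (sub_ne_zero.mpr huv))

/-- Stated with a point `w` rather than a bare radius: when `w ≠ p` the Lipschitz bounds force
`0 ≤ K` and `0 ≤ γ`, which the final inequality needs. -/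
lemma norm_sub_le_add_mul_of_norm_sub_le {E F : Type*} [NormedAddCommGroup E] [NormedAddCommGroup F]
    {f Φ : E → F} {K γ : ℝ} (hf : ∀ u v, ‖f u - f v‖ ≤ K * ‖u - v‖)
    (hΦ : ∀ u v, ‖Φ u - Φ v‖ ≤ γ * ‖u - v‖) {x p w : E} (hx : ‖p - x‖ ≤ ‖p - w‖) :
    ‖Φ x - f x‖ ≤ ‖Φ p - f p‖ + (K + γ) * ‖p - w‖ := by
  rcases eq_or_ne p w with rfl | hpw
  · obtain rfl : x = p := (norm_sub_eq_zero_iff.mp (by simpa using hx)).symm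
    simp
  have hK := nonneg_of_norm_sub_le_mul hf hpw
  have hγ := nonneg_of_norm_sub_le_mul hΦ hpw
  calc ‖Φ x - f x‖ = ‖(Φ x - Φ p) + (Φ p - f p) + (f p - f x)‖ := by abel_nf
    _ ≤ ‖Φ x - Φ p‖ + ‖Φ p - f p‖ + ‖f p - f x‖ := norm_add₃_le
    _ ≤ γ * ‖p - x‖ + ‖Φ p - f p‖ + K * ‖p - x‖ := by
        gcongr
        · simpa only [norm_sub_rev x p] using hΦ x p
        · exact hf p x
    _ ≤ ‖Φ p - f p‖ + (K + γ) * ‖p - w‖ := by nlinarith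

theorem stmt_18_general (n : ℕ) (X : Set (EuclideanSpace ℝ (Fin n)))
    (K γ : ℝ)
    (f Φ : EuclideanSpace ℝ (Fin n) → EuclideanSpace ℝ (Fin n))
    (hf : ∀ u v, ‖f u - f v‖ ≤ K * ‖u - v‖)
    (hΦ : ∀ u v, ‖Φ u - Φ v‖ ≤ γ * ‖u - v‖)
    (ι : Type) [Fintype ι] [Nonempty ι] (δ : ℝ)
    (xbar : ι → EuclideanSpace ℝ (Fin n))
    -- the hypercubes G i = {x : ‖x - x̄ i‖∞ ≤ δ} cover X
    (hcover : ∀ x ∈ X, ∃ i : ι,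
      ‖(WithLp.equiv 2 (Fin n → ℝ)) (x - xbar i)‖ ≤ δ)
    -- for each x in G i, x lies within max_k ‖x_j - v_k‖₂ of the data point x_j chosen for G i
    (xj : ι → EuclideanSpace ℝ (Fin n)) (yj : ι → EuclideanSpace ℝ (Fin n))
    (hyj : ∀ i, yj i = f (xj i))
    (ε : ι → ℝ)
    (hε : ∀ i, ε i = ‖Φ (xj i) - yj i‖ + (K + γ) *
      Finset.univ.sup' Finset.univ_nonempty (fun s : Fin n → Bool =>
        ‖xj i - (WithLp.equiv 2 (Fin n → ℝ)).symm (fun k => xbar i k + δ * (if s k then 1 else -1))‖)) :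
    ∀ x ∈ X, ‖Φ x - f x‖ ≤ Finset.univ.sup' Finset.univ_nonempty ε := by
  intro x hx
  obtain ⟨i, hi⟩ := hcover x hx
  obtain ⟨s, hs⟩ := exists_cubeVertex_norm_sub_le hi (xj i)
  obtain ⟨w, -, hw⟩ := exists_mem_eq_sup' univ_nonempty fun t => ‖xj i - cubeVertex (xbar i) δ t‖
  have hεi : ε i = ‖Φ (xj i) - f (xj i)‖ + (K + γ) * ‖xj i - cubeVertex (xbar i) δ w‖ := by
    rw [hε i, hyj i, ← hw]
    rfl
  have hxw : ‖xj i - x‖ ≤ ‖xj i - cubeVertex (xbar i) δ w‖ :=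
    hw ▸ hs.trans (le_sup' (fun t => ‖xj i - cubeVertex (xbar i) δ t‖) (mem_univ s))
  calc ‖Φ x - f x‖ ≤ ε i := hεi ▸ norm_sub_le_add_mul_of_norm_sub_le hf hΦ hxw
    _ ≤ univ.sup' univ_nonempty ε := le_sup' ε (mem_univ i)

theorem stmt_18 (n : ℕ) (X : Set (EuclideanSpace ℝ (Fin n))) (hX : IsCompact X)
    (K γ : ℝ)
    (f Φ : EuclideanSpace ℝ (Fin n) → EuclideanSpace ℝ (Fin n))
    (hf : ∀ u v, ‖f u - f v‖ ≤ K * ‖u - v‖)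
    (hΦ : ∀ u v, ‖Φ u - Φ v‖ ≤ γ * ‖u - v‖)
    (ι : Type) [Fintype ι] [Nonempty ι] (δ : ℝ) (hδ : 0 < δ)
    (xbar : ι → EuclideanSpace ℝ (Fin n))
    -- the hypercubes G i = {x : ‖x - x̄ i‖∞ ≤ δ} cover X
    (hcover : ∀ x ∈ X, ∃ i : ι,
      ‖(WithLp.equiv 2 (Fin n → ℝ)) (x - xbar i)‖ ≤ δ)
    -- for each x in G i, x lies within max_k ‖x_j - v_k‖₂ of the data point x_j chosen for G i
    (xj : ι → EuclideanSpace ℝ (Fin n)) (yj : ι → EuclideanSpace ℝ (Fin n))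
    (hyj : ∀ i, yj i = f (xj i))
    (ε : ι → ℝ)
    (hε : ∀ i, ε i = ‖Φ (xj i) - yj i‖ + (K + γ) *
      Finset.univ.sup' Finset.univ_nonempty (fun s : Fin n → Bool =>
        ‖xj i - (WithLp.equiv 2 (Fin n → ℝ)).symm (fun k => xbar i k + δ * (if s k then 1 else -1))‖)) :
    ∀ x ∈ X, ‖Φ x - f x‖ ≤ Finset.univ.sup' Finset.univ_nonempty ε :=
  stmt_18_general n X K γ f Φ hf hΦ ι δ xbar hcover xj yj hyj ε hε
end
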